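/- Corollary 3.2, monotonicity of the inhomogeneity modulus: Let m ≥ 3 be an integer, n = m − 1, and let Γ be a subgroup of the isometry group of Euclidean space ℝⁿ whose orbit space ℝⁿ/Γ is compact. Let 0 ≤ a₁ < a₀, let γ : (a₁,a₀] → ℝ be continuous, and let ρ : (a₁,a₀] × ℝⁿ → ℝ be continuous, everywhere positive, infinitely differentiable on (a₁,a₀) × ℝⁿ, Γ-periodic in the spatial variable for every a, and satisfy a ∂ρ/∂a = −(m−1) γ(a) ρ + ((m−2)/(2a²)) ( (3/2) |∇ρ|²/ρ² − Δρ/ρ ) on (a₁,a₀) × ℝⁿ. Define ρ^{max}(a) := sup_{x∈ℝⁿ} ρ(a,x), ρ^{min}(a) := inf_{x∈ℝⁿ} ρ(a,x), and the inhomogeneity modulus Δ(a) := (ρ^{max}(a) − ρ^{min}(a))/ρ^{max}(a). Then Δ is nondecreasing on (a₁,a₀]; in particular 0 ≤ Δ(a) ≤ Δ(a₀) ≤ 1 for every a ∈ (a₁,a₀]. -/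

import Mathlib

open scoped RealInnerProductSpace

noncomputable section

/-- The Euclidean Laplacian: the sum of the second partial derivatives. -/
def lap {n : ℕ} (f : EuclideanSpace ℝ (Fin n) → ℝ) (x : EuclideanSpace ℝ (Fin n)) : ℝ :=
  ∑ i : Fin n,
    fderiv ℝ (fun y => fderiv ℝ f y (EuclideanSpace.single i 1)) x (EuclideanSpace.single i 1)

/-- The natural action of the isometry group of Euclidean space on Euclidean space. -/
instance isomAction {n : ℕ} :
    MulAction (EuclideanSpace ℝ (Fin n) ≃ᵢ EuclideanSpace ℝ (Fin n))
      (EuclideanSpace ℝ (Fin n)) where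
  smul g x := g x
  one_smul _ := rfl
  mul_smul _ _ _ := rfl

open Set Filter Topology

/-!
At a maximum point of `ρ(a, ·)` the Laplacian is nonpositive, and at a minimum point the
gradient vanishes and the Laplacian is nonnegative. Since `m ≥ 2` and `a > 0`, the continuity
equation therefore bounds the relative growth rate `∂ₐρ/ρ` by `-(m-1)γ(a)/a` from above at every
minimum point and from below at every maximum point. Hence, for minimum and maximum points
`x_min`, `x_max` of `ρ(a, ·)`, the function `t ↦ 1 - ρ(t, x_min)/ρ(t, x_max)` lies below `Δ`,
touches it at `a` and has nonnegative derivative there; a continuous function admitting such a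
minorant at every point is nondecreasing. Compactness of `ℝⁿ/Γ` provides a compact set meeting
every orbit, which makes the extrema attained and continuous in `a`.
-/

theorem IsLocalMax.secondDeriv_nonpos {f f' : ℝ → ℝ} {x L : ℝ} (h : IsLocalMax f x)
    (hf : ∀ t, HasDerivAt f (f' t) t) (hf' : HasDerivAt f' L x) : L ≤ 0 := by
  by_contra! hL
  have hfx : f' x = 0 := h.hasDerivAt_eq_zero (hf x)
  have hslope : ∀ᶠ t in 𝓝[>] x, 0 < slope f' x t :=
    ((hasDerivAt_iff_tendsto_slope.1 hf').mono_left
      (nhdsWithin_mono _ fun t ht => ne_of_gt ht)).eventually (eventually_gt_nhds hL)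
  have hgood : ∀ᶠ t in 𝓝[>] x, 0 < f' t ∧ f t ≤ f x := by
    filter_upwards [hslope, nhdsWithin_le_nhds h, self_mem_nhdsWithin] with t hs hmax (ht : x < t)
    refine ⟨?_, hmax⟩
    rwa [slope_def_field, hfx, sub_zero, div_pos_iff_of_pos_right (sub_pos.2 ht)] at hs
  obtain ⟨u, hxu, hu⟩ := mem_nhdsGT_iff_exists_Ioo_subset.1 hgood
  obtain ⟨t, hxt, htu⟩ := exists_between (show x < u from hxu)
  obtain ⟨c, hc, hfc⟩ := exists_hasDerivAt_eq_slope f f' hxt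
    (fun s _ => (hf s).continuousAt.continuousWithinAt) fun s _ => hf s
  have hpos : 0 < (f t - f x) / (t - x) := hfc ▸ (hu ⟨hc.1, hc.2.trans htu⟩).1
  have hle : f t - f x ≤ 0 := sub_nonpos.2 (hu ⟨hxt, htu⟩).2
  exact absurd hpos (not_lt.2 (div_nonpos_of_nonpos_of_nonneg hle (sub_pos.2 hxt).le))

section SecondDerivative

variable {E : Type*} [NormedAddCommGroup E] [NormedSpace ℝ E] {f : E → ℝ} {x : E}

theorem IsLocalMax.fderiv_fderiv_apply_nonpos (h : IsLocalMax f x) (hf : ContDiff ℝ 2 f)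
    (v : E) : fderiv ℝ (fun y => fderiv ℝ f y v) x v ≤ 0 := by
  have hline : ∀ t : ℝ, HasDerivAt (fun s : ℝ => x + s • v) v t := fun t => by
    simpa using ((hasDerivAt_id t).smul_const v).const_add x
  have hDf : Differentiable ℝ (fun y => fderiv ℝ f y v) :=
    ((hf.fderiv_right (by norm_num)).clm_apply contDiff_const).differentiable one_ne_zero
  have hmax : IsLocalMax (fun s : ℝ => f (x + s • v)) 0 := by
    refine IsLocalMax.comp_continuous (g := fun s : ℝ => x + s • v) ?_ (hline 0).continuousAt
    simpa using h
  simpa using hmax.secondDeriv_nonpos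
    (fun t => ((hf.differentiable two_ne_zero) _).hasFDerivAt.comp_hasDerivAt t (hline t))
    ((hDf _).hasFDerivAt.comp_hasDerivAt 0 (hline 0))

theorem IsLocalMin.fderiv_fderiv_apply_nonneg (h : IsLocalMin f x) (hf : ContDiff ℝ 2 f)
    (v : E) : 0 ≤ fderiv ℝ (fun y => fderiv ℝ f y v) x v := by
  have := h.neg.fderiv_fderiv_apply_nonpos hf.neg v
  simpa only [fderiv_fun_neg, neg_apply, neg_nonpos] using this

end SecondDerivative

section Laplacian

variable {n : ℕ} {f : EuclideanSpace ℝ (Fin n) → ℝ} {x : EuclideanSpace ℝ (Fin n)}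

theorem IsLocalMax.lap_nonpos (h : IsLocalMax f x) (hf : ContDiff ℝ 2 f) : lap f x ≤ 0 :=
  Finset.sum_nonpos fun _ _ => h.fderiv_fderiv_apply_nonpos hf _

theorem IsLocalMin.lap_nonneg (h : IsLocalMin f x) (hf : ContDiff ℝ 2 f) : 0 ≤ lap f x :=
  Finset.sum_nonneg fun _ _ => h.fderiv_fderiv_apply_nonneg hf _

def gradientLaplacianTerm (f : EuclideanSpace ℝ (Fin n) → ℝ) (x : EuclideanSpace ℝ (Fin n)) : ℝ :=
  (3 / 2) * ‖gradient f x‖ ^ 2 / (f x) ^ 2 - lap f x / f x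

theorem IsLocalMax.gradientLaplacianTerm_nonneg (h : IsLocalMax f x) (hf : ContDiff ℝ 2 f)
    (hx : 0 < f x) : 0 ≤ gradientLaplacianTerm f x := by
  have hlap : lap f x / f x ≤ 0 := div_nonpos_of_nonpos_of_nonneg (h.lap_nonpos hf) hx.le
  have hgrad : 0 ≤ (3 / 2) * ‖gradient f x‖ ^ 2 / (f x) ^ 2 := by positivity
  rw [gradientLaplacianTerm]
  linarith

theorem IsLocalMin.gradientLaplacianTerm_nonpos (h : IsLocalMin f x) (hf : ContDiff ℝ 2 f)
    (hx : 0 < f x) : gradientLaplacianTerm f x ≤ 0 := by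
  have hgrad : gradient f x = 0 := by simp [gradient, h.fderiv_eq_zero]
  have hlap : 0 ≤ lap f x / f x := div_nonneg (h.lap_nonneg hf) hx.le
  simpa [gradientLaplacianTerm, hgrad] using hlap

theorem deriv_div_le_of_isLocalMin_of_isLocalMax {ρ : ℝ → EuclideanSpace ℝ (Fin n) → ℝ}
    {t c C : ℝ} {xm xM : EuclideanSpace ℝ (Fin n)} (ht : 0 < t) (hC : 0 ≤ C)
    (hρ : ContDiff ℝ 2 (ρ t)) (hxm : IsLocalMin (ρ t) xm) (hxM : IsLocalMax (ρ t) xM)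
    (hρm : 0 < ρ t xm) (hρM : 0 < ρ t xM)
    (hpde : ∀ x, t * deriv (fun s => ρ s x) t = c * ρ t x + C * gradientLaplacianTerm (ρ t) x) :
    deriv (fun s => ρ s xm) t / ρ t xm ≤ deriv (fun s => ρ s xM) t / ρ t xM := by
  have hqm := hxm.gradientLaplacianTerm_nonpos hρ hρm
  have hqM := hxM.gradientLaplacianTerm_nonneg hρ hρM
  rw [div_le_div_iff₀ hρm hρM, ← mul_le_mul_iff_right₀ ht]
  nlinarith [hpde xm, hpde xM, mul_nonneg (mul_nonneg hC hqM) hρm.le,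
    mul_nonneg (mul_nonneg hC (neg_nonneg.2 hqm)) hρM.le]

end Laplacian

theorem le_image_of_forall_minorant_hasDerivWithinAt_nonneg {G : ℝ → ℝ} {a b : ℝ}
    (hG : ContinuousOn G (Icc a b))
    (h : ∀ x ∈ Ico a b, ∃ ψ : ℝ → ℝ, ∃ ψ' ≥ (0 : ℝ), HasDerivWithinAt ψ ψ' (Ioi x) x ∧
      ψ x = G x ∧ ∀ᶠ z in 𝓝[>] x, ψ z ≤ G z) :
    ∀ x ∈ Icc a b, G a ≤ G x := by
  have key := image_le_of_liminf_slope_right_le_deriv_boundary (f := fun x => G a - G x)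
    (B := fun _ => 0) (B' := fun _ => 0) (continuousOn_const.sub hG) (sub_self _).le
    continuousOn_const (fun x _ => hasDerivWithinAt_const x _ 0) ?_
  · exact fun x hx => sub_nonpos.1 (key hx)
  intro x hx r hr
  obtain ⟨ψ, ψ', hψ', hψ, hψx, hψG⟩ := h x hx
  have hslope : Tendsto (slope ψ x) (𝓝[>] x) (𝓝 ψ') := by
    simpa using hasDerivWithinAt_iff_tendsto_slope.1 hψ
  refine Eventually.frequently ?_
  filter_upwards [hslope.eventually_const_lt (by linarith : -r < ψ'), hψG, self_mem_nhdsWithin]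
    with z hz hzG (hxz : x < z)
  have hψG' : slope ψ x z ≤ slope G x z := by
    simp only [slope_def_field]
    gcongr
    linarith
  have hneg : slope (fun y => G a - G y) x z = -slope G x z := by
    simp only [slope_def_field]
    ring
  linarith

theorem IsOpenMap.exists_isCompact_image_eq_univ {X Y : Type*} [TopologicalSpace X]
    [TopologicalSpace Y] [WeaklyLocallyCompactSpace X] [CompactSpace Y] {π : X → Y}
    (hπ : IsOpenMap π) (hsurj : Function.Surjective π) :
    ∃ K : Set X, IsCompact K ∧ π '' K = univ := by
  choose s hs hsx using fun x : X => exists_compact_mem_nhds x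
  obtain ⟨t, ht⟩ := isCompact_univ.elim_finite_subcover (fun x => π '' interior (s x))
    (fun x => hπ _ isOpen_interior) fun y _ => by
      obtain ⟨x, rfl⟩ := hsurj y
      exact mem_iUnion.2 ⟨x, mem_image_of_mem π (mem_interior_iff_mem_nhds.2 (hsx x))⟩
  refine ⟨⋃ x ∈ t, s x, t.isCompact_biUnion fun x _ => hs x, eq_univ_of_univ_subset ?_⟩
  rw [image_iUnion₂]
  exact ht.trans (iUnion₂_mono fun x _ => image_mono interior_subset)

section Invariant

variable {G X : Type*} [Group G] [MulAction G X] {K : Set X}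

theorem range_eq_image_of_smul_invariant {β : Type*} {f : X → β}
    (hK : ∀ x, ∃ g : G, g • x ∈ K) (hf : ∀ (g : G) x, f (g • x) = f x) : range f = f '' K :=
  (range_subset_iff.2 fun x => by
    obtain ⟨g, hg⟩ := hK x
    exact ⟨g • x, hg, hf g x⟩).antisymm (image_subset_range f K)

variable [TopologicalSpace X]

theorem exists_isCompact_forall_exists_smul_mem [WeaklyLocallyCompactSpace X]
    [ContinuousConstSMul G X] [CompactSpace (Quotient (MulAction.orbitRel G X))] :
    ∃ K : Set X, IsCompact K ∧ ∀ x, ∃ g : G, g • x ∈ K := by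
  obtain ⟨K, hK, hKπ⟩ := MulAction.isOpenQuotientMap_quotientMk.isOpenMap
    |>.exists_isCompact_image_eq_univ (Quotient.mk_surjective (s := MulAction.orbitRel G X))
  refine ⟨K, hK, fun x => ?_⟩
  obtain ⟨k, hk, hkx⟩ : Quotient.mk _ x ∈ Quotient.mk _ '' K := hKπ ▸ mem_univ _
  obtain ⟨g, rfl⟩ := MulAction.orbitRel_apply.1 (Quotient.exact hkx)
  exact ⟨g, hk⟩

variable {α : Type*} [ConditionallyCompleteLinearOrder α] [TopologicalSpace α] [OrderTopology α]

theorem exists_isMaxOn_of_smul_invariant [Nonempty X] {f : X → α} (hK : IsCompact K)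
    (hKG : ∀ x, ∃ g : G, g • x ∈ K) (hf : Continuous f) (hinv : ∀ (g : G) x, f (g • x) = f x) :
    ∃ x, IsMaxOn f univ x := by
  obtain ⟨g, hg⟩ := hKG (Classical.arbitrary X)
  obtain ⟨z, -, hz⟩ := hK.exists_isMaxOn (Set.nonempty_of_mem hg) hf.continuousOn
  refine ⟨z, fun y _ => ?_⟩
  obtain ⟨h, hh⟩ := hKG y
  exact (hinv h y).symm.trans_le (hz hh)

theorem exists_isMinOn_of_smul_invariant [Nonempty X] {f : X → α} (hK : IsCompact K)
    (hKG : ∀ x, ∃ g : G, g • x ∈ K) (hf : Continuous f) (hinv : ∀ (g : G) x, f (g • x) = f x) :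
    ∃ x, IsMinOn f univ x :=
  exists_isMaxOn_of_smul_invariant (α := αᵒᵈ) hK hKG hf hinv

theorem continuousOn_iSup_of_smul_invariant {T : Type*} [TopologicalSpace T] {s : Set T}
    {ρ : T → X → α} (hK : IsCompact K) (hKG : ∀ x, ∃ g : G, g • x ∈ K)
    (hρ : ContinuousOn (fun p : T × X => ρ p.1 p.2) (s ×ˢ univ))
    (hinv : ∀ t ∈ s, ∀ (g : G) x, ρ t (g • x) = ρ t x) :
    ContinuousOn (fun t => ⨆ x, ρ t x) s := by
  rw [continuousOn_iff_continuous_domRestrict]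
  have hρK : Continuous fun t : s => sSup (ρ t '' K) :=
    hK.continuous_sSup (f := fun t : s => ρ t)
      (hρ.comp_continuous (f := fun p : s × X => ((p.1 : T), p.2)) (by fun_prop)
        fun p => ⟨p.1.2, trivial⟩)
  refine hρK.congr fun t => ?_
  simp only [domRestrict_apply, iSup, range_eq_image_of_smul_invariant hKG (hinv t t.2)]

theorem continuousOn_iInf_of_smul_invariant {T : Type*} [TopologicalSpace T] {s : Set T}
    {ρ : T → X → α} (hK : IsCompact K) (hKG : ∀ x, ∃ g : G, g • x ∈ K)
    (hρ : ContinuousOn (fun p : T × X => ρ p.1 p.2) (s ×ˢ univ))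
    (hinv : ∀ t ∈ s, ∀ (g : G) x, ρ t (g • x) = ρ t x) :
    ContinuousOn (fun t => ⨅ x, ρ t x) s :=
  continuousOn_iSup_of_smul_invariant (α := αᵒᵈ) hK hKG hρ hinv

end Invariant

section Inhomogeneity

variable {X : Type*} {f : X → ℝ} {xm xM : X}

theorem IsMaxOn.ciSup_eq (h : IsMaxOn f univ xM) : ⨆ x, f x = f xM :=
  IsGreatest.csSup_eq ⟨mem_range_self xM, forall_mem_range.2 (isMaxOn_univ_iff.1 h)⟩

theorem IsMinOn.ciInf_eq (h : IsMinOn f univ xm) : ⨅ x, f x = f xm :=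
  IsLeast.csInf_eq ⟨mem_range_self xm, forall_mem_range.2 (isMinOn_univ_iff.1 h)⟩

def inhomogeneity (f : X → ℝ) : ℝ := ((⨆ x, f x) - ⨅ x, f x) / ⨆ x, f x

theorem inhomogeneity_eq (hM : IsMaxOn f univ xM) (hm : IsMinOn f univ xm) (hpos : 0 < f xM) :
    inhomogeneity f = 1 - f xm / f xM := by
  rw [inhomogeneity, hM.ciSup_eq, hm.ciInf_eq, one_sub_div hpos.ne']

theorem one_sub_div_le_inhomogeneity (hM : IsMaxOn f univ xM) (hm : IsMinOn f univ xm)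
    (hpos : ∀ x, 0 < f x) (y z : X) : 1 - f y / f z ≤ inhomogeneity f := by
  rw [inhomogeneity_eq hM hm (hpos xM)]
  gcongr 1 - ?_
  exact div_le_div₀ (hpos y).le (hm (mem_univ y)) (hpos z) (hM (mem_univ z))

theorem inhomogeneity_nonneg (hM : IsMaxOn f univ xM) (hm : IsMinOn f univ xm)
    (hpos : ∀ x, 0 < f x) : 0 ≤ inhomogeneity f := by
  simpa [div_self (hpos xM).ne'] using one_sub_div_le_inhomogeneity hM hm hpos xM xM

theorem inhomogeneity_le_one (hM : IsMaxOn f univ xM) (hm : IsMinOn f univ xm)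
    (hpos : ∀ x, 0 < f x) : inhomogeneity f ≤ 1 := by
  rw [inhomogeneity_eq hM hm (hpos xM)]
  linarith [div_pos (hpos xm) (hpos xM)]

theorem monotoneOn_inhomogeneity {ρ : ℝ → X → ℝ} {a₁ a₀ : ℝ}
    (hpos : ∀ t ∈ Ioc a₁ a₀, ∀ x, 0 < ρ t x)
    (hmax : ∀ t ∈ Ioc a₁ a₀, ∃ x, IsMaxOn (ρ t) univ x)
    (hmin : ∀ t ∈ Ioc a₁ a₀, ∃ x, IsMinOn (ρ t) univ x)
    (hsup : ContinuousOn (fun t => ⨆ x, ρ t x) (Ioc a₁ a₀))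
    (hinf : ContinuousOn (fun t => ⨅ x, ρ t x) (Ioc a₁ a₀))
    (hrate : ∀ t ∈ Ioo a₁ a₀, ∀ xm xM, IsMinOn (ρ t) univ xm → IsMaxOn (ρ t) univ xM →
      ∃ dm dM, HasDerivAt (ρ · xm) dm t ∧ HasDerivAt (ρ · xM) dM t ∧
        dm / ρ t xm ≤ dM / ρ t xM) :
    MonotoneOn (fun t => inhomogeneity (ρ t)) (Ioc a₁ a₀) := by
  intro a ha b hb hab
  have hsub : Icc a b ⊆ Ioc a₁ a₀ := Icc_subset_Ioc ha.1 hb.2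
  refine le_image_of_forall_minorant_hasDerivWithinAt_nonneg (G := fun t => inhomogeneity (ρ t))
    ?_ (fun x hx => ?_) b (right_mem_Icc.2 hab)
  · refine ((hsup.sub hinf).div hsup fun t ht => ?_).mono hsub
    obtain ⟨xM, hxM⟩ := hmax t ht
    exact hxM.ciSup_eq ▸ (hpos t ht xM).ne'
  have hx' : x ∈ Ioo a₁ a₀ := ⟨ha.1.trans_le hx.1, hx.2.trans_le hb.2⟩
  obtain ⟨xm, hxm⟩ := hmin x (Ioo_subset_Ioc_self hx')
  obtain ⟨xM, hxM⟩ := hmax x (Ioo_subset_Ioc_self hx')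
  obtain ⟨dm, dM, hdm, hdM, hd⟩ := hrate x hx' xm xM hxm hxM
  have hρm := hpos x (Ioo_subset_Ioc_self hx') xm
  have hρM := hpos x (Ioo_subset_Ioc_self hx') xM
  refine ⟨fun t => 1 - ρ t xm / ρ t xM, _, ?_,
    ((hdm.div hdM hρM.ne').const_sub 1).hasDerivWithinAt, (inhomogeneity_eq hxM hxm hρM).symm, ?_⟩
  · rw [div_le_div_iff₀ hρm hρM] at hd
    exact neg_nonneg.2 (div_nonpos_of_nonpos_of_nonneg (by linarith) (sq_nonneg _))
  · filter_upwards [nhdsWithin_le_nhds (Ioo_mem_nhds hx'.1 hx'.2)] with t ht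
    obtain ⟨ym, hym⟩ := hmin t (Ioo_subset_Ioc_self ht)
    obtain ⟨yM, hyM⟩ := hmax t (Ioo_subset_Ioc_self ht)
    exact one_sub_div_le_inhomogeneity hyM hym (hpos t (Ioo_subset_Ioc_self ht)) xm xM

end Inhomogeneity

instance {n : ℕ} (Γ : Subgroup (EuclideanSpace ℝ (Fin n) ≃ᵢ EuclideanSpace ℝ (Fin n))) :
    ContinuousConstSMul Γ (EuclideanSpace ℝ (Fin n)) :=
  ⟨fun g => (g : EuclideanSpace ℝ (Fin n) ≃ᵢ EuclideanSpace ℝ (Fin n)).continuous⟩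

theorem inhomogeneity_modulus_monotone_general (m : ℕ) (hm : 3 ≤ m) (n : ℕ)
    (Γ : Subgroup (EuclideanSpace ℝ (Fin n) ≃ᵢ EuclideanSpace ℝ (Fin n)))
    (hΓ : CompactSpace (Quotient (MulAction.orbitRel Γ (EuclideanSpace ℝ (Fin n)))))
    (a₁ a₀ : ℝ) (ha₁ : 0 ≤ a₁) (ha : a₁ < a₀)
    (γ : ℝ → ℝ)
    (ρ : ℝ → EuclideanSpace ℝ (Fin n) → ℝ)
    (hcont : ContinuousOn (fun p : ℝ × EuclideanSpace ℝ (Fin n) => ρ p.1 p.2)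
      (Set.Ioc a₁ a₀ ×ˢ Set.univ))
    (hpos : ∀ a ∈ Set.Ioc a₁ a₀, ∀ x, 0 < ρ a x)
    (hsmooth : ContDiffOn ℝ (⊤ : ℕ∞) (fun p : ℝ × EuclideanSpace ℝ (Fin n) => ρ p.1 p.2)
      (Set.Ioo a₁ a₀ ×ˢ Set.univ))
    (hper : ∀ a ∈ Set.Ioc a₁ a₀, ∀ g : Γ, ∀ x, ρ a (g • x) = ρ a x)
    (hpde : ∀ a ∈ Set.Ioo a₁ a₀, ∀ x,
      a * deriv (fun t => ρ t x) a =
        -((m : ℝ) - 1) * γ a * ρ a x +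
          (((m : ℝ) - 2) / (2 * a ^ 2)) *
            ((3 / 2) * ‖gradient (ρ a) x‖ ^ 2 / (ρ a x) ^ 2 - lap (ρ a) x / ρ a x)) :
    MonotoneOn (fun a => ((⨆ x, ρ a x) - ⨅ x, ρ a x) / ⨆ x, ρ a x) (Set.Ioc a₁ a₀) ∧
    ∀ a ∈ Set.Ioc a₁ a₀,
      (0 ≤ ((⨆ x, ρ a x) - ⨅ x, ρ a x) / ⨆ x, ρ a x) ∧
      (((⨆ x, ρ a x) - ⨅ x, ρ a x) / ⨆ x, ρ a x
        ≤ ((⨆ x, ρ a₀ x) - ⨅ x, ρ a₀ x) / ⨆ x, ρ a₀ x) ∧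
      (((⨆ x, ρ a₀ x) - ⨅ x, ρ a₀ x) / ⨆ x, ρ a₀ x ≤ 1) := by
  obtain ⟨K, hK, hKΓ⟩ := exists_isCompact_forall_exists_smul_mem (G := Γ)
    (X := EuclideanSpace ℝ (Fin n))
  have hslice : ∀ a ∈ Ioc a₁ a₀, Continuous (ρ a) := fun a ha =>
    hcont.comp_continuous (continuous_const.prodMk continuous_id) fun _ => ⟨ha, trivial⟩
  have hsmooth_slice : ∀ a ∈ Ioo a₁ a₀, ContDiff ℝ 2 (ρ a) := fun a ha =>
    contDiffOn_univ.1 <| (hsmooth.comp (contDiff_const.prodMk contDiff_id).contDiffOn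
      fun _ _ => ⟨ha, trivial⟩).of_le (WithTop.coe_le_coe.2 le_top)
  have htime : ∀ a ∈ Ioo a₁ a₀, ∀ x, HasDerivAt (fun t => ρ t x) (deriv (fun t => ρ t x) a) a :=
    fun a ha x => (((hsmooth.differentiableOn (by simp)).differentiableAt
      ((isOpen_Ioo.prod isOpen_univ).mem_nhds ⟨ha, trivial⟩)).comp a
        (differentiableAt_id.prodMk (differentiableAt_const x))).hasDerivAt
  have hmax : ∀ a ∈ Ioc a₁ a₀, ∃ x, IsMaxOn (ρ a) univ x := fun a ha =>
    exists_isMaxOn_of_smul_invariant hK hKΓ (hslice a ha) (hper a ha)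
  have hmin : ∀ a ∈ Ioc a₁ a₀, ∃ x, IsMinOn (ρ a) univ x := fun a ha =>
    exists_isMinOn_of_smul_invariant hK hKΓ (hslice a ha) (hper a ha)
  have hmono : MonotoneOn (fun a => inhomogeneity (ρ a)) (Ioc a₁ a₀) := by
    refine monotoneOn_inhomogeneity hpos hmax hmin
      (continuousOn_iSup_of_smul_invariant hK hKΓ hcont hper)
      (continuousOn_iInf_of_smul_invariant hK hKΓ hcont hper)
      fun t ht xm xM hxm hxM => ⟨_, _, htime t ht xm, htime t ht xM, ?_⟩
    have ht₀ : 0 < t := ha₁.trans_lt ht.1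
    have hm₂ : (2 : ℝ) ≤ m := by exact_mod_cast hm.trans' (by norm_num)
    exact deriv_div_le_of_isLocalMin_of_isLocalMax ht₀ (div_nonneg (by linarith) (by positivity))
      (hsmooth_slice t ht) (hxm.isLocalMin univ_mem) (hxM.isLocalMax univ_mem)
      (hpos t (Ioo_subset_Ioc_self ht) xm) (hpos t (Ioo_subset_Ioc_self ht) xM) (hpde t ht)
  have ha₀ : a₀ ∈ Ioc a₁ a₀ := right_mem_Ioc.2 ha
  refine ⟨hmono, fun a ha => ⟨?_, hmono ha ha₀ ha.2, ?_⟩⟩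
  · obtain ⟨xM, hxM⟩ := hmax a ha
    obtain ⟨xm, hxm⟩ := hmin a ha
    exact inhomogeneity_nonneg hxM hxm (hpos a ha)
  · obtain ⟨xM, hxM⟩ := hmax a₀ ha₀
    obtain ⟨xm, hxm⟩ := hmin a₀ ha₀
    exact inhomogeneity_le_one hxM hxm (hpos a₀ ha₀)

/-- Corollary 3.2, monotonicity of the inhomogeneity modulus
`Δ(a) = (ρ^{max}(a) − ρ^{min}(a))/ρ^{max}(a)`: it is nondecreasing in the scale factor,
and in particular `0 ≤ Δ(a) ≤ Δ(a₀) ≤ 1` for all `a ∈ (a₁,a₀]`. -/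
theorem inhomogeneity_modulus_monotone (m : ℕ) (hm : 3 ≤ m) (n : ℕ) (hn : n = m - 1)
    (Γ : Subgroup (EuclideanSpace ℝ (Fin n) ≃ᵢ EuclideanSpace ℝ (Fin n)))
    (hΓ : CompactSpace (Quotient (MulAction.orbitRel Γ (EuclideanSpace ℝ (Fin n)))))
    (a₁ a₀ : ℝ) (ha₁ : 0 ≤ a₁) (ha : a₁ < a₀)
    (γ : ℝ → ℝ) (hγ : ContinuousOn γ (Set.Ioc a₁ a₀))
    (ρ : ℝ → EuclideanSpace ℝ (Fin n) → ℝ)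
    (hcont : ContinuousOn (fun p : ℝ × EuclideanSpace ℝ (Fin n) => ρ p.1 p.2)
      (Set.Ioc a₁ a₀ ×ˢ Set.univ))
    (hpos : ∀ a ∈ Set.Ioc a₁ a₀, ∀ x, 0 < ρ a x)
    (hsmooth : ContDiffOn ℝ (⊤ : ℕ∞) (fun p : ℝ × EuclideanSpace ℝ (Fin n) => ρ p.1 p.2)
      (Set.Ioo a₁ a₀ ×ˢ Set.univ))
    (hper : ∀ a ∈ Set.Ioc a₁ a₀, ∀ g : Γ, ∀ x, ρ a (g • x) = ρ a x)
    (hpde : ∀ a ∈ Set.Ioo a₁ a₀, ∀ x,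
      a * deriv (fun t => ρ t x) a =
        -((m : ℝ) - 1) * γ a * ρ a x +
          (((m : ℝ) - 2) / (2 * a ^ 2)) *
            ((3 / 2) * ‖gradient (ρ a) x‖ ^ 2 / (ρ a x) ^ 2 - lap (ρ a) x / ρ a x)) :
    MonotoneOn (fun a => ((⨆ x, ρ a x) - ⨅ x, ρ a x) / ⨆ x, ρ a x) (Set.Ioc a₁ a₀) ∧
    ∀ a ∈ Set.Ioc a₁ a₀,
      (0 ≤ ((⨆ x, ρ a x) - ⨅ x, ρ a x) / ⨆ x, ρ a x) ∧
      (((⨆ x, ρ a x) - ⨅ x, ρ a x) / ⨆ x, ρ a x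
        ≤ ((⨆ x, ρ a₀ x) - ⨅ x, ρ a₀ x) / ⨆ x, ρ a₀ x) ∧
      (((⨆ x, ρ a₀ x) - ⨅ x, ρ a₀ x) / ⨆ x, ρ a₀ x ≤ 1) :=
  inhomogeneity_modulus_monotone_general m hm n Γ hΓ a₁ a₀ ha₁ ha γ ρ hcont hpos hsmooth hper hpde
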